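/- Uniqueness part of the characterization: if an inconsistency ranking ⪰ on the set of all pairwise comparison matrices (of all sizes n ≥ 3) satisfies positive responsiveness, invariance under inversion of preferences, homogeneous treatment of entities, scale invariance, monotonicity, and reducibility, then for all pairwise comparison matrices A and B, A ⪰ B implies A ⪰^K B; hence ⪰ coincides with the Koczkodaj inconsistency ranking ⪰^K. -/
import Mathlib


open Matrix

/-- A pairwise comparison matrix (of size `n ≥ 3`): a positive reciprocal matrix. -/
structure PCM where
  n : ℕ
  hn : 3 ≤ n
  A : Matrix (Fin n) (Fin n) ℝ
  pos : ∀ i j, 0 < A i j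
  recip : ∀ i j, A j i = 1 / A i j

/-- Index triples `i < j < k`. -/
def triples (n : ℕ) : Finset (Fin n × Fin n × Fin n) :=
  Finset.univ.filter fun t => t.1 < t.2.1 ∧ t.2.1 < t.2.2

lemma triples_nonempty (n : ℕ) (hn : 3 ≤ n) : (triples n).Nonempty :=
  ⟨(⟨0, by omega⟩, ⟨1, by omega⟩, ⟨2, by omega⟩), by
    simp only [triples, Finset.mem_filter, Finset.mem_univ, true_and]
    exact ⟨Fin.mk_lt_mk.mpr (by omega), Fin.mk_lt_mk.mpr (by omega)⟩⟩

/-- The Koczkodaj ratio `K(A) = max_{i<j<k} max{a_ij a_jk / a_ik, a_ik/(a_ij a_jk)}`. -/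
noncomputable def KratioM {n : ℕ} (hn : 3 ≤ n) (A : Matrix (Fin n) (Fin n) ℝ) : ℝ :=
  (triples n).sup' (triples_nonempty n hn) fun t =>
    max (A t.1 t.2.1 * A t.2.1 t.2.2 / A t.1 t.2.2)
        (A t.1 t.2.2 / (A t.1 t.2.1 * A t.2.1 t.2.2))

noncomputable def Kratio (M : PCM) : ℝ := KratioM M.hn M.A

/-- The Koczkodaj inconsistency ranking: `A ⪰ᴷ B` iff `K(A) ≤ K(B)`. -/
noncomputable def KRank (M N : PCM) : Prop := Kratio M ≤ Kratio N

/-- The triad `(t1; t2; t3)` as a 3×3 pairwise comparison matrix. -/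
noncomputable def triad (t1 t2 t3 : ℝ) (h1 : 0 < t1) (h2 : 0 < t2) (h3 : 0 < t3) : PCM where
  n := 3
  hn := le_refl 3
  A := !![1, t1, t2; 1/t1, 1, t3; 1/t2, 1/t3, 1]
  pos := by
    intro i j
    fin_cases i <;> fin_cases j <;> simp <;> positivity
  recip := by
    intro i j
    fin_cases i <;> fin_cases j <;> simp [one_div_one_div]

/-- The transpose of a pairwise comparison matrix. -/
def PCM.tr (M : PCM) : PCM where
  n := M.n
  hn := M.hn
  A := M.A.transpose
  pos := by intro i j; rw [Matrix.transpose_apply]; exact M.pos j i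
  recip := by intro i j; rw [Matrix.transpose_apply, Matrix.transpose_apply]; exact M.recip j i

/-- The principal submatrix of `M` given by an index selection `σ`. -/
def subPCM (M : PCM) (m : ℕ) (hm : 3 ≤ m) (σ : Fin m → Fin M.n) : PCM where
  n := m
  hn := hm
  A := Matrix.of fun i j => M.A (σ i) (σ j)
  pos := fun i j => M.pos (σ i) (σ j)
  recip := fun i j => M.recip (σ i) (σ j)

/-- `T` is a triad (3×3 pairwise comparison submatrix) of `M`. -/
def IsTriadOf (T M : PCM) : Prop :=
  ∃ σ : Fin 3 → Fin M.n, Function.Injective σ ∧ T = subPCM M 3 (le_refl 3) σ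

/-- `B` is a pairwise comparison submatrix of `M` (of size `3 ≤ m < n`). -/
def IsSubPCM (B M : PCM) : Prop :=
  ∃ (m : ℕ) (hm : 3 ≤ m) (σ : Fin m → Fin M.n),
    m < M.n ∧ Function.Injective σ ∧ B = subPCM M m hm σ

/-- Equivalence (`∼`) derived from a ranking `⪰`. -/
def Sim (R : PCM → PCM → Prop) (M N : PCM) : Prop := R M N ∧ R N M

/-- Strict relation (`≻`) derived from a ranking `⪰`. -/
def Strict (R : PCM → PCM → Prop) (M N : PCM) : Prop := R M N ∧ ¬ R N M

/-- An inconsistency ranking is a total and transitive relation. -/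
def IsRanking (R : PCM → PCM → Prop) : Prop :=
  (∀ M N, R M N ∨ R N M) ∧ Transitive R

/-- Positive responsiveness. -/
noncomputable def PR (R : PCM → PCM → Prop) : Prop :=
  ∀ (s2 t2 : ℝ) (hs : 1 ≤ s2) (ht : 1 ≤ t2),
    (R (triad 1 s2 1 one_pos (lt_of_lt_of_le one_pos hs) one_pos)
       (triad 1 t2 1 one_pos (lt_of_lt_of_le one_pos ht) one_pos) ↔ s2 ≤ t2)

/-- Invariance under inversion of preferences. -/
noncomputable def IIP (R : PCM → PCM → Prop) : Prop :=
  ∀ (t1 t2 t3 : ℝ) (h1 : 0 < t1) (h2 : 0 < t2) (h3 : 0 < t3),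
    Sim R (triad t1 t2 t3 h1 h2 h3) (triad t1 t2 t3 h1 h2 h3).tr

/-- Homogeneous treatment of entities. -/
noncomputable def HTE (R : PCM → PCM → Prop) : Prop :=
  ∀ (t2 t3 : ℝ) (h2 : 0 < t2) (h3 : 0 < t3),
    Sim R (triad 1 t2 t3 one_pos h2 h3)
          (triad 1 (t2 / t3) 1 one_pos (div_pos h2 h3) one_pos)

/-- Scale invariance. -/
noncomputable def SI (R : PCM → PCM → Prop) : Prop :=
  ∀ (t1 t2 t3 k : ℝ) (h1 : 0 < t1) (h2 : 0 < t2) (h3 : 0 < t3) (hk : 0 < k),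
    Sim R (triad t1 t2 t3 h1 h2 h3)
          (triad (k * t1) (k ^ 2 * t2) (k * t3)
            (by positivity) (by positivity) (by positivity))

/-- Monotonicity: `A ⪯ T` for every triad `T` of `A`. -/
def MON (R : PCM → PCM → Prop) : Prop :=
  ∀ M T : PCM, IsTriadOf T M → R T M

/-- Reducibility: every pairwise comparison matrix is equivalent to one of its triads. -/
def RED (R : PCM → PCM → Prop) : Prop :=
  ∀ M : PCM, ∃ T : PCM, IsTriadOf T M ∧ Sim R M T

/-- `min`-based variant of the Koczkodaj ratio. -/
noncomputable def KminM {n : ℕ} (hn : 3 ≤ n) (A : Matrix (Fin n) (Fin n) ℝ) : ℝ :=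
  (triples n).inf' (triples_nonempty n hn) fun t =>
    max (A t.1 t.2.1 * A t.2.1 t.2.2 / A t.1 t.2.2)
        (A t.1 t.2.2 / (A t.1 t.2.1 * A t.2.1 t.2.2))

noncomputable def Kmin (M : PCM) : ℝ := KminM M.hn M.A

/-- Ranking of Example 1: `A ⪰¹ B` iff `Kmin A ≥ Kmin B`. -/
noncomputable def Rank1 (M N : PCM) : Prop := Kmin N ≤ Kmin M

/-- Upper-triangle-only variant of the Koczkodaj ratio. -/
noncomputable def K2M {n : ℕ} (hn : 3 ≤ n) (A : Matrix (Fin n) (Fin n) ℝ) : ℝ :=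
  (triples n).sup' (triples_nonempty n hn) fun t =>
    A t.1 t.2.1 * A t.2.1 t.2.2 / A t.1 t.2.2

noncomputable def K2 (M : PCM) : ℝ := K2M M.hn M.A

/-- Ranking of Example 2. -/
noncomputable def Rank2 (M N : PCM) : Prop := K2 M ≤ K2 N

noncomputable def K3M {n : ℕ} (hn : 3 ≤ n) (A : Matrix (Fin n) (Fin n) ℝ) : ℝ :=
  (triples n).sup' (triples_nonempty n hn) fun t =>
    max (A t.2.1 t.2.2 ^ 2 / A t.1 t.2.2) (A t.1 t.2.2 / A t.2.1 t.2.2 ^ 2)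

noncomputable def K3 (M : PCM) : ℝ := K3M M.hn M.A

/-- Ranking of Example 3. -/
noncomputable def Rank3 (M N : PCM) : Prop := K3 M ≤ K3 N

noncomputable def K4M {n : ℕ} (hn : 3 ≤ n) (A : Matrix (Fin n) (Fin n) ℝ) : ℝ :=
  (triples n).sup' (triples_nonempty n hn) fun t =>
    max (A t.2.1 t.2.2 / A t.1 t.2.2) (A t.1 t.2.2 / A t.2.1 t.2.2)

noncomputable def K4 (M : PCM) : ℝ := K4M M.hn M.A

/-- Ranking of Example 4. -/
noncomputable def Rank4 (M N : PCM) : Prop := K4 M ≤ K4 N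

/-- Ranking of Example 5: `A ⪰⁵ B` iff `Kmin A ≤ Kmin B`. -/
noncomputable def Rank5 (M N : PCM) : Prop := Kmin M ≤ Kmin N

/-- Ranking of Example 6: `A ⪰⁶ B` iff `K(A)ⁿ ≤ K(B)ᵐ`. -/
noncomputable def Rank6 (M N : PCM) : Prop := Kratio M ^ M.n ≤ Kratio N ^ N.n

/-- The Koczkodaj inconsistency index. -/
noncomputable def IKM {n : ℕ} (hn : 3 ≤ n) (A : Matrix (Fin n) (Fin n) ℝ) : ℝ :=
  (triples n).sup' (triples_nonempty n hn) fun t =>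
    min |1 - A t.1 t.2.2 / (A t.1 t.2.1 * A t.2.1 t.2.2)|
        |1 - A t.1 t.2.1 * A t.2.1 t.2.2 / A t.1 t.2.2|

noncomputable def IK (M : PCM) : ℝ := IKM M.hn M.A


/-! ### Auxiliary lemmas for the uniqueness theorem -/

lemma PCM.diag_one (M : PCM) (i : Fin M.n) : M.A i i = 1 := by
  have h := M.recip i i
  have hp := M.pos i i
  field_simp at h
  nlinarith [sq_nonneg (M.A i i - 1), sq_nonneg (M.A i i + 1)]

lemma PCM.ext' {M N : PCM} (h : M.n = N.n) (hA : HEq M.A N.A) : M = N := by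
  cases M; cases N; dsimp at h; subst h; cases hA; rfl

noncomputable def fval (M : PCM) (i j k : Fin M.n) : ℝ :=
  max (M.A i j * M.A j k / M.A i k) (M.A i k / (M.A i j * M.A j k))

lemma fval_swap12 (M : PCM) (i j k : Fin M.n) : fval M i j k = fval M j i k := by
  have h1 := (M.pos i j).ne'
  have h2 := (M.pos j k).ne'
  have h3 := (M.pos i k).ne'
  have e1 : M.A j i * M.A i k / M.A j k = M.A i k / (M.A i j * M.A j k) := by
    rw [M.recip i j, one_div_mul_eq_div, div_div]
  have e2 : M.A j k / (M.A j i * M.A i k) = M.A i j * M.A j k / M.A i k := by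
    rw [M.recip i j, one_div_mul_eq_div, div_div_eq_mul_div, mul_comm (M.A j k) (M.A i j)]
  unfold fval
  rw [e1, e2, max_comm]

lemma fval_swap23 (M : PCM) (i j k : Fin M.n) : fval M i j k = fval M i k j := by
  have h1 := (M.pos i j).ne'
  have h2 := (M.pos j k).ne'
  have h3 := (M.pos i k).ne'
  have e1 : M.A i k * M.A k j / M.A i j = M.A i k / (M.A i j * M.A j k) := by
    rw [M.recip j k, mul_one_div, div_div, mul_comm (M.A j k) (M.A i j)]
  have e2 : M.A i j / (M.A i k * M.A k j) = M.A i j * M.A j k / M.A i k := by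
    rw [M.recip j k, mul_one_div, div_div_eq_mul_div]
  unfold fval
  rw [e1, e2, max_comm]

lemma triples_three : triples 3 = {((0 : Fin 3), (1 : Fin 3), (2 : Fin 3))} := by decide

lemma KratioM_eq_sup_fval (M : PCM) :
    Kratio M = (triples M.n).sup' (triples_nonempty M.n M.hn)
      (fun t => fval M t.1 t.2.1 t.2.2) := rfl

lemma fval_le_Kratio (M : PCM) {i j k : Fin M.n} (hij : i ≠ j) (hik : i ≠ k) (hjk : j ≠ k) :
    fval M i j k ≤ Kratio M := by
  rw [KratioM_eq_sup_fval]
  have key : ∀ a b c : Fin M.n, a < b → b < c → fval M a b c ≤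
      (triples M.n).sup' (triples_nonempty M.n M.hn) (fun t => fval M t.1 t.2.1 t.2.2) := by
    intro a b c hab hbc
    have hmem : (a, b, c) ∈ triples M.n := by
      unfold triples
      exact Finset.mem_filter.mpr ⟨Finset.mem_univ _, hab, hbc⟩
    exact Finset.le_sup' (fun t => fval M t.1 t.2.1 t.2.2) hmem
  rcases lt_or_gt_of_ne hij with h1 | h1 <;> rcases lt_or_gt_of_ne hik with h2 | h2 <;>
    rcases lt_or_gt_of_ne hjk with h3 | h3
  · exact key i j k h1 h3
  · rw [fval_swap23 M i j k]; exact key i k j h2 h3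
  · exact absurd ((h2.trans h1).trans h3) (lt_irrefl k)
  · rw [fval_swap23 M i j k, fval_swap12 M i k j]; exact key k i j h2 h1
  · rw [fval_swap12 M i j k]; exact key j i k h1 h2
  · exact absurd ((h3.trans h1).trans h2) (lt_irrefl k)
  · rw [fval_swap12 M i j k, fval_swap23 M j i k]; exact key j k i h3 h2
  · rw [fval_swap23 M i j k, fval_swap12 M i k j, fval_swap23 M k i j]; exact key k j i h3 h1

lemma one_le_max_mul_one {u v : ℝ} (hu : 0 < u) (huv : u * v = 1) : 1 ≤ max u v := by
  rcases le_total 1 u with h | h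
  · exact le_max_of_le_left h
  · refine le_max_of_le_right ?_
    nlinarith

lemma one_le_fval (M : PCM) (i j k : Fin M.n) : 1 ≤ fval M i j k := by
  have h1 := M.pos i j
  have h2 := M.pos j k
  have h3 := M.pos i k
  refine one_le_max_mul_one (by positivity) ?_
  field_simp

lemma one_le_Kratio (M : PCM) : 1 ≤ Kratio M := by
  obtain ⟨t, ht⟩ := triples_nonempty M.n M.hn
  rw [KratioM_eq_sup_fval]
  exact le_trans (one_le_fval M t.1 t.2.1 t.2.2)
    (Finset.le_sup' (f := fun t => fval M t.1 t.2.1 t.2.2) ht)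

lemma Kratio_pos (M : PCM) : 0 < Kratio M := lt_of_lt_of_le one_pos (one_le_Kratio M)


lemma sup3 (g : Fin 3 × Fin 3 × Fin 3 → ℝ) (hne : (triples 3).Nonempty) :
    (triples 3).sup' hne g = g ((0 : Fin 3), (1 : Fin 3), (2 : Fin 3)) := by
  apply le_antisymm
  · apply Finset.sup'_le
    intro t ht
    rw [triples_three] at ht
    rw [Finset.mem_singleton.mp ht]
  · exact Finset.le_sup' g (by rw [triples_three]; exact Finset.mem_singleton_self _)

lemma triad_congr {a b c a' b' c' : ℝ} (ha : a = a') (hb : b = b') (hc : c = c')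
    (h1 : 0 < a) (h2 : 0 < b) (h3 : 0 < c) (h1' : 0 < a') (h2' : 0 < b') (h3' : 0 < c') :
    triad a b c h1 h2 h3 = triad a' b' c' h1' h2' h3' := by
  subst ha; subst hb; subst hc; rfl

lemma Kratio_triad (t1 t2 t3 : ℝ) (h1 : 0 < t1) (h2 : 0 < t2) (h3 : 0 < t3) :
    Kratio (triad t1 t2 t3 h1 h2 h3) = max (t1 * t3 / t2) (t2 / (t1 * t3)) := by
  have step1 : Kratio (triad t1 t2 t3 h1 h2 h3) =
      fval (triad t1 t2 t3 h1 h2 h3) (0 : Fin 3) (1 : Fin 3) (2 : Fin 3) := by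
    unfold Kratio KratioM
    exact sup3 _ _
  rw [step1]
  simp [fval, triad, Matrix.cons_val_zero, Matrix.cons_val_one, Matrix.head_cons]

lemma Kratio_sub3 (M : PCM) (hm : 3 ≤ 3) (σ : Fin 3 → Fin M.n) :
    Kratio (subPCM M 3 hm σ) = fval M (σ 0) (σ 1) (σ 2) := by
  unfold Kratio KratioM
  exact sup3 _ _

lemma subPCM_eq_triad (M : PCM) (hm : 3 ≤ 3) (σ : Fin 3 → Fin M.n) :
    subPCM M 3 hm σ = triad (M.A (σ 0) (σ 1)) (M.A (σ 0) (σ 2)) (M.A (σ 1) (σ 2))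
      (M.pos _ _) (M.pos _ _) (M.pos _ _) := by
  refine PCM.ext' rfl (heq_of_eq ?_)
  ext i j
  fin_cases i <;> fin_cases j <;>
    simp [subPCM, triad, Matrix.cons_val_zero, Matrix.cons_val_one, Matrix.head_cons] <;>
    first
      | exact M.diag_one _
      | (rw [M.recip, one_div])

lemma tr_triad (t1 t2 t3 : ℝ) (h1 : 0 < t1) (h2 : 0 < t2) (h3 : 0 < t3) :
    (triad t1 t2 t3 h1 h2 h3).tr =
      triad (1 / t1) (1 / t2) (1 / t3) (by positivity) (by positivity) (by positivity) := by
  refine PCM.ext' rfl (heq_of_eq ?_)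
  ext i j
  fin_cases i <;> fin_cases j <;>
    simp [PCM.tr, triad, Matrix.cons_val_zero, Matrix.cons_val_one, Matrix.head_cons,
      one_div_one_div]


section RankingLemmas

variable {R : PCM → PCM → Prop}

lemma Sim.symm' {a b : PCM} (h : Sim R a b) : Sim R b a := ⟨h.2, h.1⟩

lemma Sim.trans' (hT : Transitive R) {a b c : PCM} (h1 : Sim R a b) (h2 : Sim R b c) :
    Sim R a c := ⟨hT h1.1 h2.1, hT h2.2 h1.2⟩

lemma Sim.congr_left {a a' b : PCM} (h : Sim R a b) (e : a = a') : Sim R a' b := e ▸ h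

lemma Sim.congr_right {a b b' : PCM} (h : Sim R a b) (e : b = b') : Sim R a b' := e ▸ h

/-- Any triad is `R`-equivalent to `(1; t2/(t1 t3); 1)`. -/
lemma to_unit (hT : Transitive R) (hHTE : HTE R) (hSI : SI R)
    (t1 t2 t3 : ℝ) (h1 : 0 < t1) (h2 : 0 < t2) (h3 : 0 < t3) :
    Sim R (triad t1 t2 t3 h1 h2 h3)
      (triad 1 (t2 / (t1 * t3)) 1 one_pos (by positivity) one_pos) := by
  have s1 := hSI t1 t2 t3 (1 / t1) h1 h2 h3 (by positivity)
  have e1 : triad (1 / t1 * t1) ((1 / t1) ^ 2 * t2) (1 / t1 * t3)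
      (by positivity) (by positivity) (by positivity) =
      triad 1 (t2 / t1 ^ 2) (t3 / t1) one_pos (by positivity) (by positivity) :=
    triad_congr (by field_simp) (by field_simp; try ring) (by field_simp) _ _ _ _ _ _
  have s2 := Sim.congr_right s1 e1
  have s3 := hHTE (t2 / t1 ^ 2) (t3 / t1) (by positivity) (by positivity)
  have e2 : triad 1 (t2 / t1 ^ 2 / (t3 / t1)) 1 one_pos
      (div_pos (by positivity) (by positivity)) one_pos =
      triad 1 (t2 / (t1 * t3)) 1 one_pos (by positivity) one_pos :=
    triad_congr rfl (by field_simp; try ring) rfl _ _ _ _ _ _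
  exact Sim.trans' hT s2 (Sim.congr_right s3 e2)

/-- Any triad is `R`-equivalent to its canonical form `(1; K; 1)`. -/
lemma canon_triad (hT : Transitive R) (hIIP : IIP R) (hHTE : HTE R) (hSI : SI R)
    (t1 t2 t3 : ℝ) (h1 : 0 < t1) (h2 : 0 < t2) (h3 : 0 < t3) :
    Sim R (triad t1 t2 t3 h1 h2 h3)
      (triad 1 (max (t1 * t3 / t2) (t2 / (t1 * t3))) 1 one_pos (by positivity) one_pos) := by
  have hx : 0 < t2 / (t1 * t3) := by positivity
  have hprod : t1 * t3 / t2 * (t2 / (t1 * t3)) = 1 := by field_simp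
  have main := to_unit hT hHTE hSI t1 t2 t3 h1 h2 h3
  have hiip := (hIIP t1 t2 t3 h1 h2 h3)
  have htr := tr_triad t1 t2 t3 h1 h2 h3
  have main2 := to_unit hT hHTE hSI (1 / t1) (1 / t2) (1 / t3)
    (by positivity) (by positivity) (by positivity)
  have e2 : triad 1 (1 / t2 / (1 / t1 * (1 / t3))) 1 one_pos (by positivity) one_pos =
      triad 1 (t1 * t3 / t2) 1 one_pos (by positivity) one_pos :=
    triad_congr rfl (by field_simp; try ring) rfl _ _ _ _ _ _
  have combined2 : Sim R (triad t1 t2 t3 h1 h2 h3)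
      (triad 1 (t1 * t3 / t2) 1 one_pos (by positivity) one_pos) :=
    Sim.trans' hT (Sim.congr_right hiip htr) (Sim.congr_right main2 e2)
  rcases le_total (t2 / (t1 * t3)) 1 with hle | hle
  · have hmax : max (t1 * t3 / t2) (t2 / (t1 * t3)) = t1 * t3 / t2 := by
      apply max_eq_left
      nlinarith
    exact Sim.congr_right combined2 (triad_congr rfl hmax.symm rfl _ _ _ _ _ _)
  · have hmax : max (t1 * t3 / t2) (t2 / (t1 * t3)) = t2 / (t1 * t3) := by
      apply max_eq_right
      nlinarith
    exact Sim.congr_right main (triad_congr rfl hmax.symm rfl _ _ _ _ _ _)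

/-- Any 3×3 submatrix is `R`-equivalent to `(1; K(submatrix); 1)`. -/
lemma canon_sub (hT : Transitive R) (hIIP : IIP R) (hHTE : HTE R) (hSI : SI R)
    (M : PCM) (hm : 3 ≤ 3) (σ : Fin 3 → Fin M.n) :
    Sim R (subPCM M 3 hm σ)
      (triad 1 (Kratio (subPCM M 3 hm σ)) 1 one_pos (Kratio_pos _) one_pos) := by
  have e1 := subPCM_eq_triad M hm σ
  have c := canon_triad hT hIIP hHTE hSI (M.A (σ 0) (σ 1)) (M.A (σ 0) (σ 2)) (M.A (σ 1) (σ 2))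
    (M.pos _ _) (M.pos _ _) (M.pos _ _)
  have e2 : triad 1 (max (M.A (σ 0) (σ 1) * M.A (σ 1) (σ 2) / M.A (σ 0) (σ 2))
        (M.A (σ 0) (σ 2) / (M.A (σ 0) (σ 1) * M.A (σ 1) (σ 2)))) 1
        one_pos (lt_max_iff.mpr (Or.inl (div_pos (mul_pos (M.pos _ _) (M.pos _ _))
          (M.pos _ _)))) one_pos =
      triad 1 (Kratio (subPCM M 3 hm σ)) 1 one_pos (Kratio_pos _) one_pos := by
    refine triad_congr rfl ?_ rfl _ _ _ _ _ _
    rw [e1, Kratio_triad]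
  exact Sim.congr_right (Sim.congr_left c e1.symm) e2

lemma vec3_inj {n : ℕ} {i j k : Fin n} (hij : i < j) (hjk : j < k) :
    Function.Injective ![i, j, k] := by
  have hik := hij.trans hjk
  intro a b hab
  fin_cases a <;> fin_cases b <;>
    simp only [Matrix.cons_val_zero, Matrix.cons_val_one, Matrix.head_cons,
      Matrix.cons_val_two, Matrix.tail_cons] at hab <;>
    first
      | rfl
      | exact absurd hab hij.ne
      | exact absurd hab hij.ne'
      | exact absurd hab hjk.ne
      | exact absurd hab hjk.ne'
      | exact absurd hab hik.ne
      | exact absurd hab hik.ne'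

/-- Every pairwise comparison matrix is `R`-equivalent to `(1; K(M); 1)`. -/
lemma canon_M (hrank : IsRanking R) (hPR : PR R) (hIIP : IIP R) (hHTE : HTE R)
    (hSI : SI R) (hMON : MON R) (hRED : RED R) (M : PCM) :
    Sim R M (triad 1 (Kratio M) 1 one_pos (Kratio_pos M) one_pos) := by
  obtain ⟨hTot, hT⟩ := hrank
  obtain ⟨T, ⟨σ, hσ, hTe⟩, hsim⟩ := hRED M
  subst hTe
  have hσ01 : σ 0 ≠ σ 1 := fun h => by have := hσ h; exact absurd this (by decide)
  have hσ02 : σ 0 ≠ σ 2 := fun h => by have := hσ h; exact absurd this (by decide)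
  have hσ12 : σ 1 ≠ σ 2 := fun h => by have := hσ h; exact absurd this (by decide)
  have hKT_le : Kratio (subPCM M 3 (le_refl 3) σ) ≤ Kratio M := by
    rw [Kratio_sub3]
    exact fval_le_Kratio M hσ01 hσ02 hσ12
  obtain ⟨t, htmem, htval⟩ :=
    Finset.exists_mem_eq_sup' (triples_nonempty M.n M.hn) (fun t => fval M t.1 t.2.1 t.2.2)
  obtain ⟨hij, hjk⟩ : t.1 < t.2.1 ∧ t.2.1 < t.2.2 := by
    have := htmem
    unfold triples at this
    exact (Finset.mem_filter.mp this).2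
  have hinj : Function.Injective ![t.1, t.2.1, t.2.2] := vec3_inj hij hjk
  have hmon : R (subPCM M 3 (le_refl 3) ![t.1, t.2.1, t.2.2]) M :=
    hMON M _ ⟨![t.1, t.2.1, t.2.2], hinj, rfl⟩
  have hKT' : Kratio (subPCM M 3 (le_refl 3) ![t.1, t.2.1, t.2.2]) = Kratio M := by
    rw [Kratio_sub3]
    show fval M t.1 t.2.1 t.2.2 = Kratio M
    rw [KratioM_eq_sup_fval]
    exact htval.symm
  have cT := canon_sub hT hIIP hHTE hSI M (le_refl 3) σ
  have cT' := canon_sub hT hIIP hHTE hSI M (le_refl 3) ![t.1, t.2.1, t.2.2]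
  have cT'' : Sim R (subPCM M 3 (le_refl 3) ![t.1, t.2.1, t.2.2])
      (triad 1 (Kratio M) 1 one_pos (Kratio_pos M) one_pos) :=
    Sim.congr_right cT' (triad_congr rfl hKT' rfl _ _ _ _ _ _)
  set KT := Kratio (subPCM M 3 (le_refl 3) σ) with hKTdef
  have r1 : R (triad 1 (Kratio M) 1 one_pos (Kratio_pos M) one_pos)
      (triad 1 KT 1 one_pos (Kratio_pos _) one_pos) :=
    hT (hT (hT cT''.2 hmon) hsim.1) cT.1
  have hKM_le : Kratio M ≤ KT :=
    (hPR (Kratio M) KT (one_le_Kratio M) (one_le_Kratio _)).mp r1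
  have hKeq : KT = Kratio M := le_antisymm hKT_le hKM_le
  exact Sim.trans' hT hsim (Sim.congr_right cT (triad_congr rfl hKeq rfl _ _ _ _ _ _))

end RankingLemmas


/-- Uniqueness part of the characterization: any inconsistency ranking satisfying the six
axioms implies, hence coincides with, the Koczkodaj inconsistency ranking. -/
theorem koczkodaj_ranking_uniqueness :
    ∀ R : PCM → PCM → Prop, IsRanking R →
      PR R → IIP R → HTE R → SI R → MON R → RED R →
      (∀ M N : PCM, R M N → KRank M N) ∧ (∀ M N : PCM, R M N ↔ KRank M N) := by
  intro R hrank hPR hIIP hHTE hSI hMON hRED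
  have hT : Transitive R := hrank.2
  have key : ∀ M N : PCM, R M N ↔ KRank M N := by
    intro M N
    have cM := canon_M hrank hPR hIIP hHTE hSI hMON hRED M
    have cN := canon_M hrank hPR hIIP hHTE hSI hMON hRED N
    constructor
    · intro h
      have r : R (triad 1 (Kratio M) 1 one_pos (Kratio_pos M) one_pos)
          (triad 1 (Kratio N) 1 one_pos (Kratio_pos N) one_pos) :=
        hT (hT cM.2 h) cN.1
      exact (hPR (Kratio M) (Kratio N) (one_le_Kratio M) (one_le_Kratio N)).mp r
    · intro h
      have r := (hPR (Kratio M) (Kratio N) (one_le_Kratio M) (one_le_Kratio N)).mpr h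
      exact hT (hT cM.1 r) cN.2
  exact ⟨fun M N h => (key M N).mp h, key⟩
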